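/- Relative Satisfiability: if Φ is a semantic morphism from normal theory T₁ to normal theory T₂ whose obligations are valid in T₂, and T₂ has a general model, then T₁ has a general model. -/

import Mathlib

set_option maxHeartbeats 1000000

namespace CTTuqe

/-- Types of CTT_uqe: base types (0 = o, 1 = ε, n+2 = individuals) and function types. -/
inductive Ty where
  | base : ℕ → Ty
  | arr : Ty → Ty → Ty
deriving DecidableEq

def oTy : Ty := .base 0
def epsTy : Ty := .base 1

/-- Names of constants, including the logical constants of CTT_uqe. -/
inductive CName where
  | eq | iota | isVar | isCon | appc | absc | condc | quo | sub | isFreeIn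
  | isVarAt (a : Ty) | isConAt (a : Ty) | isExprAt (a : Ty)
  | user (n : ℕ)
deriving DecidableEq

/-- Expressions of CTT_uqe. -/
inductive Expr where
  | var : ℕ → Ty → Expr
  | con : CName → Ty → Expr
  | app : Expr → Expr → Expr
  | abs : ℕ → Ty → Expr → Expr
  | cond : Expr → Expr → Expr → Expr
  | quot : Expr → Expr
  | eval : Expr → Expr → Expr
deriving DecidableEq

/-- Eval-free expressions. -/
def EvalFree : Expr → Prop
  | .var _ _ => True
  | .con _ _ => True
  | .app f x => EvalFree f ∧ EvalFree x
  | .abs _ _ b => EvalFree b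
  | .cond a b c => EvalFree a ∧ EvalFree b ∧ EvalFree c
  | .quot a => EvalFree a
  | .eval _ _ => False

/-- Typing judgement for expressions. -/
inductive HasType : Expr → Ty → Prop
  | var (n : ℕ) (a : Ty) : HasType (.var n a) a
  | con (c : CName) (a : Ty) : HasType (.con c a) a
  | app {f x : Expr} {a b : Ty} : HasType f (.arr a b) → HasType x a → HasType (.app f x) b
  | abs {n : ℕ} {a : Ty} {B : Expr} {b : Ty} : HasType B b → HasType (.abs n a B) (.arr a b)
  | cond {A B C : Expr} {a : Ty} : HasType A oTy → HasType B a → HasType C a →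
      HasType (.cond A B C) a
  | quot {A : Expr} {a : Ty} : EvalFree A → HasType A a → HasType (.quot A) epsTy
  | eval {A B : Expr} {b : Ty} : HasType A epsTy → HasType B b → HasType (.eval A B) b

def appC : Expr := .con .appc (epsTy.arr (epsTy.arr epsTy))
def absC : Expr := .con .absc (epsTy.arr (epsTy.arr epsTy))
def condC : Expr := .con .condc (epsTy.arr (epsTy.arr (epsTy.arr epsTy)))
def quoC : Expr := .con .quo (epsTy.arr epsTy)

/-- The mapping 𝓔 from eval-free expressions to expressions of type ε. -/
def E : Expr → Expr
  | .var n a => .quot (.var n a)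
  | .con c a => .quot (.con c a)
  | .app f x => .app (.app appC (E f)) (E x)
  | .abs n a b => .app (.app absC (.quot (.var n a))) (E b)
  | .cond a b c => .app (.app (.app condC (E a)) (E b)) (E c)
  | .quot a => .app quoC (E a)
  | .eval a b => .eval a b

/-- A construction is an expression in the range of 𝓔 (on eval-free expressions). -/
def IsConstruction (e : Expr) : Prop := ∃ A, EvalFree A ∧ E A = e

def Construction := {e : Expr // IsConstruction e}

/-- Free variables of an (eval-free) expression; quotation binds everything. -/
def freeVars : Expr → Finset (ℕ × Ty)
  | .var n a => {(n, a)}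
  | .con _ _ => ∅
  | .app f x => freeVars f ∪ freeVars x
  | .abs n a b => freeVars b \ {(n, a)}
  | .cond a b c => freeVars a ∪ freeVars b ∪ freeVars c
  | .quot _ => ∅
  | .eval a b => freeVars a ∪ freeVars b

/-- Free variables computed as if quotation did not bind anything. -/
def varsThroughQuot : Expr → Finset (ℕ × Ty)
  | .var n a => {(n, a)}
  | .con _ _ => ∅
  | .app f x => varsThroughQuot f ∪ varsThroughQuot x
  | .abs n a b => varsThroughQuot b \ {(n, a)}
  | .cond a b c => varsThroughQuot a ∪ varsThroughQuot b ∪ varsThroughQuot c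
  | .quot a => varsThroughQuot a
  | .eval a b => varsThroughQuot a ∪ varsThroughQuot b

/-- All variables occurring in an expression (free or bound, through quotations). -/
def allVars : Expr → Finset (ℕ × Ty)
  | .var n a => {(n, a)}
  | .con _ _ => ∅
  | .app f x => allVars f ∪ allVars x
  | .abs n a b => insert (n, a) (allVars b)
  | .cond a b c => allVars a ∪ allVars b ∪ allVars c
  | .quot a => allVars a
  | .eval a b => allVars a ∪ allVars b

/-- Immediate subexpression relation. -/
inductive DirectSub : Expr → Expr → Prop
  | appF {f x} : DirectSub f (.app f x)
  | appX {f x} : DirectSub x (.app f x)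
  | absB {n a b} : DirectSub b (.abs n a b)
  | condA {a b c} : DirectSub a (.cond a b c)
  | condB {a b c} : DirectSub b (.cond a b c)
  | condC {a b c} : DirectSub c (.cond a b c)
  | quotA {a} : DirectSub a (.quot a)
  | evalA {a b} : DirectSub a (.eval a b)
  | evalB {a b} : DirectSub b (.eval a b)

/-- Proper subexpression relation. -/
def ProperSub : Expr → Expr → Prop := Relation.TransGen DirectSub

/- Logical sugar (Table 3). -/
def eqC (a : Ty) : Expr := .con .eq (a.arr (a.arr oTy))
def eqE (a : Ty) (x y : Expr) : Expr := .app (.app (eqC a) x) y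
def trueE : Expr := eqE (oTy.arr (oTy.arr oTy)) (eqC oTy) (eqC oTy)
def falseE : Expr := eqE (oTy.arr oTy) (.abs 0 oTy trueE) (.abs 0 oTy (.var 0 oTy))
def forallE (n : ℕ) (a : Ty) (body : Expr) : Expr :=
  eqE (a.arr oTy) (.abs n a trueE) (.abs n a body)
def andE (x y : Expr) : Expr :=
  eqE ((oTy.arr (oTy.arr oTy)).arr oTy)
    (.abs 2 (oTy.arr (oTy.arr oTy)) (.app (.app (.var 2 (oTy.arr (oTy.arr oTy))) trueE) trueE))
    (.abs 2 (oTy.arr (oTy.arr oTy)) (.app (.app (.var 2 (oTy.arr (oTy.arr oTy))) x) y))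
def impE (x y : Expr) : Expr := eqE oTy x (andE x y)
def notE (x : Expr) : Expr := eqE oTy falseE x
def orE (x y : Expr) : Expr := notE (andE (notE x) (notE y))
def neqE (a : Ty) (x y : Expr) : Expr := notE (eqE a x y)
def existsE (n : ℕ) (a : Ty) (body : Expr) : Expr := notE (forallE n a (notE body))
def iotaC (a : Ty) : Expr := .con .iota ((a.arr oTy).arr a)
/-- The canonical undefined expression ⊥_α. -/
def bottom : Ty → Expr
  | .base 0 => falseE
  | a => .app (iotaC a) (.abs 0 a (neqE a (.var 0 a) (.var 0 a)))
/-- A↓ -/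
def defdE (a : Ty) (x : Expr) : Expr := eqE a x x
/-- A ≃ B -/
def simeqE (a : Ty) (x y : Expr) : Expr := impE (orE (defdE a x) (defdE a y)) (eqE a x y)
/-- p ⇀ q : λ f. ∀ x. (f x ≠ ⊥ ⊃ (p x ∧ q (f x))) -/
def arrowPred (p q : Expr) (a b : Ty) : Expr :=
  .abs 1 (a.arr b) (forallE 0 a (impE
    (neqE b (.app (.var 1 (a.arr b)) (.var 0 a)) (bottom b))
    (andE (.app p (.var 0 a)) (.app q (.app (.var 1 (a.arr b)) (.var 0 a))))))

/-- The (partial, junk-total) type of an expression. -/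
def typeOf : Expr → Ty
  | .var _ a => a
  | .con _ a => a
  | .app f _ => match typeOf f with | .arr _ b => b | t => t
  | .abs _ a b => .arr a (typeOf b)
  | .cond _ b _ => typeOf b
  | .quot _ => epsTy
  | .eval _ b => typeOf b

/-- τ maps a predicate of type α → o to the type α. -/
def tauOf (p : Expr) : Ty := match typeOf p with | .arr a _ => a | t => t

/- Languages and theories. -/
def TyInSets (bs : Set ℕ) : Ty → Prop
  | .base n => n ∈ bs
  | .arr a b => TyInSets bs a ∧ TyInSets bs b

def ExprInSets (bs : Set ℕ) (cs : Set (CName × Ty)) : Expr → Prop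
  | .var _ a => TyInSets bs a
  | .con c a => (c, a) ∈ cs ∧ TyInSets bs a
  | .app f x => ExprInSets bs cs f ∧ ExprInSets bs cs x
  | .abs _ a b => TyInSets bs a ∧ ExprInSets bs cs b
  | .cond a b c => ExprInSets bs cs a ∧ ExprInSets bs cs b ∧ ExprInSets bs cs c
  | .quot a => ExprInSets bs cs a
  | .eval a b => ExprInSets bs cs a ∧ ExprInSets bs cs b

/-- A theory of CTT_uqe. -/
structure Theory where
  bases : Set ℕ
  consts : Set (CName × Ty)
  axioms : Set Expr
  bases_o : 0 ∈ bases
  bases_eps : 1 ∈ bases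
  axioms_lang : ∀ A ∈ axioms, ExprInSets bases consts A ∧ HasType A oTy

def Theory.InLang (T : Theory) (A : Expr) : Prop := ExprInSets T.bases T.consts A

/- Semantics. -/

/-- The full domains over a choice U of sets of individuals. -/
def FullDom (U : ℕ → Type) : Ty → Type
  | .base 0 => Bool
  | .base 1 => Construction
  | .base (n+2) => U n
  | .arr a b => FullDom U a → Option (FullDom U b)

/-- A frame of CTT_uqe. -/
structure Frame (U : ℕ → Type) where
  dom : (a : Ty) → Set (FullDom U a)
  dom_o : dom (.base 0) = Set.univ
  dom_eps : dom (.base 1) = Set.univ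
  dom_ind : ∀ n : ℕ, (dom (.base (n+2))).Nonempty
  fn_mem : ∀ (a b : Ty) (f : FullDom U (a.arr b)), f ∈ dom (a.arr b) →
      ∀ x ∈ dom a, ∀ y, f x = some y → y ∈ dom b
  fn_total : ∀ (a : Ty) (f : FullDom U (a.arr (.base 0))), f ∈ dom (a.arr (.base 0)) →
      ∀ x ∈ dom a, (f x).isSome

/-- Assignments into a frame. -/
def Assn {U : ℕ → Type} (F : Frame U) := {φ : (n : ℕ) → (a : Ty) → FullDom U a // ∀ n a, φ n a ∈ F.dom a}

def Assn.upd {U : ℕ → Type} {F : Frame U} (φ : Assn F) (n : ℕ) (a : Ty) (d : FullDom U a)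
    (hd : d ∈ F.dom a) : Assn F :=
  ⟨fun m b => if h : n = m ∧ a = b then h.2 ▸ d else φ.1 m b, by
    intro m b
    by_cases h : n = m ∧ a = b
    · simp only [dif_pos h]
      have h2 := h.2
      subst h2
      exact hd
    · simp only [dif_neg h]
      exact φ.2 m b⟩

/-- An interpretation of CTT_uqe, with the thirteen conditions on logical constants. -/
structure Interp (U : ℕ → Type) where
  fr : Frame U
  I : (c : CName) → (a : Ty) → FullDom U a
  I_mem : ∀ c a, I c a ∈ fr.dom a
  eq_cond : ∀ (a : Ty), ∀ x ∈ fr.dom a, ∃ g, I .eq (a.arr (a.arr oTy)) x = some g ∧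
      ∀ y ∈ fr.dom a, ∃ b : Bool, g y = some b ∧ (b = true ↔ x = y)
  iota_cond : ∀ (a : Ty), a ≠ oTy → ∀ p ∈ fr.dom (a.arr oTy),
      (∀ d ∈ fr.dom a, (p d = some true ∧ ∀ d' ∈ fr.dom a, p d' = some true → d' = d) →
        I .iota ((a.arr oTy).arr a) p = some d) ∧
      ((¬ ∃ d ∈ fr.dom a, p d = some true ∧ ∀ d' ∈ fr.dom a, p d' = some true → d' = d) →
        I .iota ((a.arr oTy).arr a) p = none)
  isVar_cond : ∀ A : Construction, ∃ b : Bool, I .isVar (epsTy.arr oTy) A = some b ∧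
      (b = true ↔ ∃ (n : ℕ) (a : Ty), A.1 = Expr.quot (.var n a))
  isVarAt_cond : ∀ (a : Ty) (A : Construction), ∃ b : Bool, I (.isVarAt a) (epsTy.arr oTy) A = some b ∧
      (b = true ↔ ∃ n : ℕ, A.1 = Expr.quot (.var n a))
  isCon_cond : ∀ A : Construction, ∃ b : Bool, I .isCon (epsTy.arr oTy) A = some b ∧
      (b = true ↔ ∃ (c : CName) (a : Ty), A.1 = Expr.quot (.con c a))
  isConAt_cond : ∀ (a : Ty) (A : Construction), ∃ b : Bool, I (.isConAt a) (epsTy.arr oTy) A = some b ∧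
      (b = true ↔ ∃ c : CName, A.1 = Expr.quot (.con c a))
  app_cond : ∀ A B : Construction,
      ((∃ g C, I .appc (epsTy.arr (epsTy.arr epsTy)) A = some g ∧ g B = some C) ↔
        IsConstruction (Expr.app (Expr.app appC A.1) B.1)) ∧
      (∀ g C, I .appc (epsTy.arr (epsTy.arr epsTy)) A = some g → g B = some C →
        C.1 = Expr.app (Expr.app appC A.1) B.1)
  abs_cond : ∀ A B : Construction,
      ((∃ g C, I .absc (epsTy.arr (epsTy.arr epsTy)) A = some g ∧ g B = some C) ↔
        IsConstruction (Expr.app (Expr.app absC A.1) B.1)) ∧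
      (∀ g C, I .absc (epsTy.arr (epsTy.arr epsTy)) A = some g → g B = some C →
        C.1 = Expr.app (Expr.app absC A.1) B.1)
  cond_cond : ∀ A B C : Construction,
      ((∃ g h D, I .condc (epsTy.arr (epsTy.arr (epsTy.arr epsTy))) A = some g ∧ g B = some h ∧
          h C = some D) ↔
        IsConstruction (Expr.app (Expr.app (Expr.app condC A.1) B.1) C.1)) ∧
      (∀ g h D, I .condc (epsTy.arr (epsTy.arr (epsTy.arr epsTy))) A = some g → g B = some h →
        h C = some D → D.1 = Expr.app (Expr.app (Expr.app condC A.1) B.1) C.1)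
  quo_cond : ∀ A : Construction, ∃ C : Construction, I .quo (epsTy.arr epsTy) A = some C ∧
      C.1 = Expr.app quoC A.1
  isExprAt_cond : ∀ (a : Ty) (A : Construction), ∃ b : Bool,
      I (.isExprAt a) (epsTy.arr oTy) A = some b ∧
      (b = true ↔ ∃ B : Expr, EvalFree B ∧ HasType B a ∧ E B = A.1)
  sub_cond : ∀ A B : Construction, ∃ g b, I .sub (epsTy.arr (epsTy.arr oTy)) A = some g ∧
      g B = some b ∧ (b = true ↔ ProperSub A.1 B.1)
  isFreeIn_cond : ∀ A B : Construction, ∃ g b, I .isFreeIn (epsTy.arr (epsTy.arr oTy)) A = some g ∧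
      g B = some b ∧
      (b = true ↔ ∃ (n : ℕ) (a : Ty) (C : Expr), EvalFree C ∧ E C = B.1 ∧
        A.1 = Expr.quot (.var n a) ∧ (n, a) ∈ freeVars C)

/-- For type o, undefinedness falls back to falsehood. -/
def fallback (U : ℕ → Type) : (b : Ty) → Option (FullDom U b) → Option (FullDom U b)
  | .base 0, v => some (v.getD false)
  | _, v => v

/-- A general model of CTT_uqe: an interpretation with a valuation function
satisfying the seven valuation clauses. -/
structure GeneralModel (U : ℕ → Type) where
  intp : Interp U
  V : Assn intp.fr → Expr → (a : Ty) → Option (FullDom U a)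
  V_mem : ∀ φ A a y, V φ A a = some y → y ∈ intp.fr.dom a
  v_var : ∀ φ (n : ℕ) (a : Ty), V φ (.var n a) a = some (φ.1 n a)
  v_con : ∀ φ (c : CName) (a : Ty), V φ (.con c a) a = some (intp.I c a)
  v_app : ∀ φ (F X : Expr) (a b : Ty), HasType F (a.arr b) → HasType X a →
      V φ (.app F X) b =
        fallback U b ((V φ F (a.arr b)).bind fun f => (V φ X a).bind fun x => f x)
  v_abs : ∀ φ (n : ℕ) (a : Ty) (B : Expr) (b : Ty), HasType B b →
      ∃ f, V φ (.abs n a B) (a.arr b) = some f ∧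
        ∀ d (hd : d ∈ intp.fr.dom a), f d = V (φ.upd n a d hd) B b
  v_cond : ∀ φ (A B C : Expr) (a : Ty), HasType A oTy → HasType B a → HasType C a →
      V φ (.cond A B C) a = (V φ A oTy).bind (fun t => bif t then V φ B a else V φ C a)
  v_quot : ∀ φ (A : Expr) (h : EvalFree A), V φ (.quot A) epsTy = some ⟨E A, A, h, rfl⟩
  v_eval_pos : ∀ φ (A B : Expr) (b : Ty) (C : Construction) (D : Expr), EvalFree D →
      HasType D b → V φ A epsTy = some C → E D = C.1 → V φ (.eval A B) b = V φ D b
  v_eval_neg : ∀ φ (A B : Expr) (b : Ty),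
      (¬ ∃ (C : Construction) (D : Expr), EvalFree D ∧ HasType D b ∧ V φ A epsTy = some C ∧
        E D = C.1) →
      V φ (.eval A B) b = fallback U b none

/-- Validity in a general model. -/
def ValidInModel {U : ℕ → Type} (M : GeneralModel U) (A : Expr) : Prop :=
  ∀ φ : Assn M.intp.fr, M.V φ A oTy = some true

/-- M is a general model for the theory T. -/
def ModelOf {U : ℕ → Type} (T : Theory) (M : GeneralModel U) : Prop :=
  ∀ A ∈ T.axioms, ValidInModel M A

/-- Semantically closed: the value does not depend on the assignment, in any general model. -/
def SemClosedExpr (A : Expr) (a : Ty) : Prop :=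
  ∀ (U : ℕ → Type) (M : GeneralModel U) (φ ψ : Assn M.intp.fr), M.V φ A a = M.V ψ A a

/-- Semantically closed relative to a theory. -/
def SemClosedIn (T : Theory) (A : Expr) (a : Ty) : Prop :=
  ∀ (U : ℕ → Type) (M : GeneralModel U), ModelOf T M →
    ∀ φ ψ : Assn M.intp.fr, M.V φ A a = M.V ψ A a

/-- Validity in a theory. -/
def ValidInTheory (T : Theory) (A : Expr) : Prop :=
  ∀ (U : ℕ → Type) (M : GeneralModel U), ModelOf T M → ValidInModel M A

/-- A normal theory: all axioms are semantically closed. -/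
def Theory.Normal (T : Theory) : Prop := ∀ A ∈ T.axioms, SemClosedExpr A oTy

/- Translations. -/

def tyTransAux (m : ℕ → Ty) : Ty → Ty
  | .base 0 => .base 0
  | .base 1 => .base 1
  | .base (n+2) => m (n+2)
  | .arr a b => .arr (tyTransAux m a) (tyTransAux m b)

/-- A translation Φ = (μ, ν) from T₁ to T₂. -/
structure Translation (T₁ T₂ : Theory) where
  muT : ℕ → Ty
  muP : ℕ → Expr
  nuVar : ℕ × Ty → ℕ
  nuCon : CName × Ty → CName
  nuVar_inj : Function.Injective nuVar
  nuCon_inj : Function.Injective nuCon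
  muT_lang : ∀ n, 2 ≤ n → TyInSets T₂.bases (muT n)
  muP_lang : ∀ n, 2 ≤ n → ExprInSets T₂.bases T₂.consts (muP n)
  muP_type : ∀ n, 2 ≤ n → HasType (muP n) ((muT n).arr oTy)
  muP_closed : ∀ n, 2 ≤ n → SemClosedExpr (muP n) ((muT n).arr oTy)
  nuCon_mem : ∀ p ∈ T₁.consts, (nuCon p, tyTransAux muT p.2) ∈ T₂.consts

variable {T₁ T₂ : Theory}

def Translation.tyTrans (Φ : Translation T₁ T₂) : Ty → Ty := tyTransAux Φ.muT

/-- μ on base types (with μ(o), μ(ε) the trivially true predicates). -/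
def Translation.muBase (Φ : Translation T₁ T₂) : ℕ → Expr
  | 0 => .abs 0 oTy trueE
  | 1 => .abs 0 epsTy trueE
  | n+2 => Φ.muP (n+2)

/-- The canonical extension μ̄ of μ to all types. -/
def Translation.muBar (Φ : Translation T₁ T₂) : Ty → Expr
  | .base n => Φ.muBase n
  | .arr a b => arrowPred (Φ.muBar a) (Φ.muBar b) (Φ.tyTrans a) (Φ.tyTrans b)

/-- The canonical extension ν̄ of ν to all expressions. -/
def Translation.nuBar (Φ : Translation T₁ T₂) : Expr → Expr
  | .var n a => .var (Φ.nuVar (n, a)) (Φ.tyTrans a)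
  | .con c a => .con (Φ.nuCon (c, a)) (Φ.tyTrans a)
  | .app f x => .app (Φ.nuBar f) (Φ.nuBar x)
  | .abs n a b => .abs (Φ.nuVar (n, a)) (Φ.tyTrans a)
      (.cond ((Φ.muBar a).app (.var (Φ.nuVar (n, a)) (Φ.tyTrans a)))
        (Φ.nuBar b) (bottom (Φ.tyTrans (typeOf b))))
  | .cond a b c => .cond (Φ.nuBar a) (Φ.nuBar b) (Φ.nuBar c)
  | .quot a => .quot (Φ.nuBar a)
  | .eval a b => .eval (Φ.nuBar a) (Φ.nuBar b)

/-- Obligation 3 of a translation: the interpretation of equality. -/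
def eqObligation (Φ : Translation T₁ T₂) (a : Ty) : Expr :=
  eqE ((Φ.tyTrans a).arr ((Φ.tyTrans a).arr oTy))
    (.con (Φ.nuCon (.eq, a.arr (a.arr oTy))) ((Φ.tyTrans a).arr ((Φ.tyTrans a).arr oTy)))
    (.abs 0 (Φ.tyTrans a) (.abs 1 (Φ.tyTrans a)
      (.cond (andE ((Φ.muBar a).app (.var 0 (Φ.tyTrans a)))
                   ((Φ.muBar a).app (.var 1 (Φ.tyTrans a))))
        (eqE (Φ.tyTrans a) (.var 0 (Φ.tyTrans a)) (.var 1 (Φ.tyTrans a)))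
        (bottom oTy))))

/-- Obligation 4 of a translation: the interpretation of definite description. -/
def iotaObligation (Φ : Translation T₁ T₂) (a : Ty) : Expr :=
  eqE (((Φ.tyTrans a).arr oTy).arr (Φ.tyTrans a))
    (.con (Φ.nuCon (.iota, (a.arr oTy).arr a)) (((Φ.tyTrans a).arr oTy).arr (Φ.tyTrans a)))
    (.abs 0 ((Φ.tyTrans a).arr oTy)
      (.cond ((Φ.muBar (a.arr oTy)).app (.var 0 ((Φ.tyTrans a).arr oTy)))
        (.app (iotaC (Φ.tyTrans a)) (.var 0 ((Φ.tyTrans a).arr oTy)))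
        (bottom (Φ.tyTrans a))))

/-- Obligations 5/6: ν(c) = c for syntactic logical constants. -/
def synConstObligation (Φ : Translation T₁ T₂) (c c' : CName) (t : Ty) : Expr :=
  eqE t (.con (Φ.nuCon (c, t)) t) (.con c' t)

/-- The obligations of a translation Φ. -/
inductive Obligation (Φ : Translation T₁ T₂) : Expr → Prop
  | baseOb : ∀ n ∈ T₁.bases, Obligation Φ
      (existsE 0 (Φ.tyTrans (.base n)) ((Φ.muBase n).app (.var 0 (Φ.tyTrans (.base n)))))
  | constOb : ∀ p ∈ T₁.consts, Obligation Φ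
      ((Φ.muBar p.2).app (.con (Φ.nuCon p) (Φ.tyTrans p.2)))
  | eqOb : ∀ a : Ty, TyInSets T₁.bases a → Obligation Φ (eqObligation Φ a)
  | iotaOb : ∀ a : Ty, TyInSets T₁.bases a → a ≠ oTy → Obligation Φ (iotaObligation Φ a)
  | isVarOb : Obligation Φ (synConstObligation Φ .isVar .isVar (epsTy.arr oTy))
  | isConOb : Obligation Φ (synConstObligation Φ .isCon .isCon (epsTy.arr oTy))
  | appOb : Obligation Φ (synConstObligation Φ .appc .appc (epsTy.arr (epsTy.arr epsTy)))
  | absOb : Obligation Φ (synConstObligation Φ .absc .absc (epsTy.arr (epsTy.arr epsTy)))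
  | condOb : Obligation Φ
      (synConstObligation Φ .condc .condc (epsTy.arr (epsTy.arr (epsTy.arr epsTy))))
  | quoOb : Obligation Φ (synConstObligation Φ .quo .quo (epsTy.arr epsTy))
  | subOb : Obligation Φ (synConstObligation Φ .sub .sub (epsTy.arr (epsTy.arr oTy)))
  | isFreeInOb : Obligation Φ (synConstObligation Φ .isFreeIn .isFreeIn (epsTy.arr (epsTy.arr oTy)))
  | isVarAtOb : ∀ b : Ty, TyInSets T₁.bases b → Obligation Φ
      (synConstObligation Φ (.isVarAt b) (.isVarAt (Φ.tyTrans b)) (epsTy.arr oTy))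
  | isConAtOb : ∀ b : Ty, TyInSets T₁.bases b → Obligation Φ
      (synConstObligation Φ (.isConAt b) (.isConAt (Φ.tyTrans b)) (epsTy.arr oTy))
  | isExprAtOb : ∀ b : Ty, TyInSets T₁.bases b → Obligation Φ
      (synConstObligation Φ (.isExprAt b) (.isExprAt (Φ.tyTrans b)) (epsTy.arr oTy))
  | axOb : ∀ A ∈ T₁.axioms, Obligation Φ (Φ.nuBar A)

/-- A semantic morphism from T₁ to T₂. -/
def IsSemMorphism (Φ : Translation T₁ T₂) : Prop :=
  ∀ A : Expr, T₁.InLang A → HasType A oTy → SemClosedExpr A oTy →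
    ValidInTheory T₁ A → ValidInTheory T₂ (Φ.nuBar A)

end CTTuqe

namespace CTTuqe


/-- If an eval-free expression's construction has the shape of an abstraction
construction, the expression is an abstraction. -/
lemma evalfree_shape_abs {D : Expr} (hD : EvalFree D) {X Y : Expr}
    (h : E D = .app (.app absC X) Y) : ∃ n a B, D = .abs n a B := by
  cases D with
  | var n a => simp [E] at h
  | con c a => simp [E] at h
  | app f x => simp [E, appC, absC] at h
  | abs n a B => exact ⟨n, a, B, rfl⟩
  | cond a b c => simp [E, condC, absC] at h
  | quot a => simp [E, quoC, absC] at h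
  | eval a b => exact absurd hD (by simp [EvalFree])

lemma not_hasType_abs_o {n : ℕ} {a : Ty} {B : Expr} : ¬ HasType (.abs n a B) oTy := by
  intro h
  cases h

/-- Evaluating a quoted abstraction at type o always yields false. -/
lemma eval_quot_abs_val {U : ℕ → Type} (M : GeneralModel U) (φ : Assn M.intp.fr)
    (n : ℕ) (a : Ty) (body B : Expr) (hEF : EvalFree (Expr.abs n a body)) :
    M.V φ (.eval (.quot (.abs n a body)) B) oTy = some false := by
  have hq := M.v_quot φ (.abs n a body) hEF
  have hneg : ¬ ∃ (C : Construction) (D : Expr), EvalFree D ∧ HasType D oTy ∧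
      M.V φ (.quot (.abs n a body)) epsTy = some C ∧ E D = C.1 := by
    rintro ⟨C, D, hD1, hD2, hC, hE⟩
    rw [hq] at hC
    have hC1 : C.1 = E (Expr.abs n a body) := by
      cases Option.some.inj hC
      rfl
    rw [hC1] at hE
    obtain ⟨m, c, B', rfl⟩ := evalfree_shape_abs hD1 (by simpa [E] using hE)
    exact not_hasType_abs_o hD2
  have h := M.v_eval_neg φ (.quot (.abs n a body)) B oTy hneg
  exact h.trans rfl

lemma evalFree_trueE : EvalFree trueE := by
  simp [trueE, eqE, eqC, EvalFree]

lemma evalFree_falseE : EvalFree falseE := by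
  simp [falseE, eqE, eqC, trueE, EvalFree]

def idAbs : Expr := .abs 0 oTy (.var 0 oTy)
def Abad : Expr := .eval (.quot idAbs) (.var 0 oTy)

lemma nuBar_Abad {T₁ T₂ : Theory} (Φ : Translation T₁ T₂) :
    Φ.nuBar Abad = .eval (.quot (.abs (Φ.nuVar (0, oTy)) oTy
      (.cond (.app (.abs 0 oTy trueE) (.var (Φ.nuVar (0, oTy)) oTy))
        (.var (Φ.nuVar (0, oTy)) oTy) falseE))) (.var (Φ.nuVar (0, oTy)) oTy) := rfl

/-- Relative Satisfiability: if Φ is a semantic morphism from normal theory T₁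
to normal theory T₂ whose obligations are valid in T₂, and T₂ has a general model, then
T₁ has a general model. -/
theorem relative_satisfiability {T₁ T₂ : Theory} (h₁ : T₁.Normal) (h₂ : T₂.Normal)
    (Φ : Translation T₁ T₂) (hmorph : IsSemMorphism Φ)
    (hob : ∀ A : Expr, Obligation Φ A → ValidInTheory T₂ A)
    (hsat : ∃ (U : ℕ → Type) (M : GeneralModel U), ModelOf T₂ M) :
    ∃ (U : ℕ → Type) (M : GeneralModel U), ModelOf T₁ M := by
  obtain ⟨U, M₂, hM₂⟩ := hsat
  by_contra hno
  have valid1 : ValidInTheory T₁ Abad := fun U M hM =>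
    absurd ⟨U, M, hM⟩ hno
  have lang : T₁.InLang Abad := ⟨⟨T₁.bases_o, T₁.bases_o⟩, T₁.bases_o⟩
  have htype : HasType Abad oTy :=
    .eval (.quot (show EvalFree idAbs from trivial) (.abs (.var 0 oTy))) (.var 0 oTy)
  have hval : ∀ (U : ℕ → Type) (M : GeneralModel U) (φ : Assn M.intp.fr),
      M.V φ Abad oTy = some false := fun U M φ =>
    eval_quot_abs_val M φ 0 oTy (.var 0 oTy) (.var 0 oTy) trivial
  have hclosed : SemClosedExpr Abad oTy := fun U M φ ψ => by
    rw [hval U M φ, hval U M ψ]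
  have hv2 := hmorph Abad lang htype hclosed valid1 U M₂ hM₂
  have φ₀ : Assn M₂.intp.fr :=
    ⟨fun n a => M₂.intp.I (.user 0) a, fun n a => M₂.intp.I_mem _ a⟩
  have h1 := hv2 φ₀
  rw [nuBar_Abad Φ] at h1
  have hEF : EvalFree (Expr.abs (Φ.nuVar (0, oTy)) oTy
      (.cond (.app (.abs 0 oTy trueE) (.var (Φ.nuVar (0, oTy)) oTy))
        (.var (Φ.nuVar (0, oTy)) oTy) falseE)) :=
    ⟨⟨evalFree_trueE, trivial⟩, trivial, evalFree_falseE⟩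
  have h2 := eval_quot_abs_val M₂ φ₀ (Φ.nuVar (0, oTy)) oTy
      (.cond (.app (.abs 0 oTy trueE) (.var (Φ.nuVar (0, oTy)) oTy))
        (.var (Φ.nuVar (0, oTy)) oTy) falseE)
      (.var (Φ.nuVar (0, oTy)) oTy) hEF
  rw [h2] at h1
  exact Bool.false_ne_true (Option.some.inj h1)


end CTTuqe
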